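/- arXiv:2201.02129 — 3 statements merged into one kernel-verified Lean document; each statement's English description precedes it below -/
import Mathlib

section
/- Let Γ₁, Γ₂ > 0, s > 0, R̄₁ > 0 and R̄₂ ≥ 0. Define α₂^{lb} = (2^{R̄₂} − 1)/(Γ₂ s) and α₂^{ub} = (Γ₁s + 1 − 2^{R̄₁})/(Γ₂ s (2^{R̄₁} − 1)). Then α₂^{ub} ≥ α₂^{lb} if and only if s ≥ 2^{R̄₂}(2^{R̄₁} − 1)/Γ₁. -/
/-!
Both bounds share the positive factor `1 / (Γ₂ s)`, so after cancelling it and clearing the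
positive denominator `2^{R̄₁} − 1` the criterion becomes the linear condition
`Γ₁ s − (2^{R̄₁} − 1) ≥ (2^{R̄₂} − 1)(2^{R̄₁} − 1)`, i.e. `Γ₁ s ≥ 2^{R̄₂}(2^{R̄₁} − 1)`.
-/

theorem div_mul_pred_ge_pred_div_iff {K : Type*} [Field K] [LinearOrder K] [IsStrictOrderedRing K]
    {Γ c s p q : K} (hΓ : 0 < Γ) (hc : 0 < c) (hp : 1 < p) :
    (Γ * s + 1 - p) / (c * (p - 1)) ≥ (q - 1) / c ↔ s ≥ q * (p - 1) / Γ := by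
  rw [ge_iff_le, mul_comm c, ← div_div, div_le_div_iff_of_pos_right hc,
    le_div_iff₀ (sub_pos.2 hp), ge_iff_le, div_le_iff₀ hΓ]
  constructor <;> intro h <;> linarith

theorem mpa_pairing_criterion_general
    (Γ₁ Γ₂ s R₁bar R₂bar : ℝ)
    (hΓ₁ : 0 < Γ₁) (hΓ₂ : 0 < Γ₂) (hs : 0 < s) (hR₁ : 0 < R₁bar) :
    (Γ₁ * s + 1 - (2 : ℝ) ^ R₁bar) / (Γ₂ * s * ((2 : ℝ) ^ R₁bar - 1)) ≥
        ((2 : ℝ) ^ R₂bar - 1) / (Γ₂ * s) ↔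
      s ≥ (2 : ℝ) ^ R₂bar * ((2 : ℝ) ^ R₁bar - 1) / Γ₁ :=
  div_mul_pred_ge_pred_div_iff hΓ₁ (mul_pos hΓ₂ hs) (Real.one_lt_rpow one_lt_two hR₁)

/-- MPA pairing criterion: α₂^{ub} ≥ α₂^{lb} iff sinc²(δ) = s ≥ 2^{R̄₂}(2^{R̄₁} − 1)/Γ₁. -/
theorem mpa_pairing_criterion
    (Γ₁ Γ₂ s R₁bar R₂bar : ℝ)
    (hΓ₁ : 0 < Γ₁) (hΓ₂ : 0 < Γ₂) (hs : 0 < s) (hR₁ : 0 < R₁bar) (hR₂ : 0 ≤ R₂bar) :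
    (Γ₁ * s + 1 - (2 : ℝ) ^ R₁bar) / (Γ₂ * s * ((2 : ℝ) ^ R₁bar - 1)) ≥
        ((2 : ℝ) ^ R₂bar - 1) / (Γ₂ * s) ↔
      s ≥ (2 : ℝ) ^ R₂bar * ((2 : ℝ) ^ R₁bar - 1) / Γ₁ :=
  mpa_pairing_criterion_general Γ₁ Γ₂ s R₁bar R₂bar hΓ₁ hΓ₂ hs hR₁
end

section
/- (MPA guarantee.) Let Γ₁, Γ₂ > 0, s > 0, R̄₁ > 0, R̄₂ ≥ 0, and suppose s ≥ 2^{R̄₂}(2^{R̄₁} − 1)/Γ₁ and s ≥ (2^{R̄₂} − 1)/Γ₂. Set α₁ = 1 and α₂ = min{α₂^{ub}, 1}, where α₂^{ub} = (Γ₁s + 1 − 2^{R̄₁})/(Γ₂ s (2^{R̄₁} − 1)). Then both minimum-rate constraints hold: log₂(1 + Γ₁s/(1 + α₂Γ₂s)) ≥ R̄₁ and log₂(1 + α₂Γ₂s) ≥ R̄₂. -/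
/-!
Write `A = 2^R̄₁`, `B = 2^R̄₂`, `G₁ = Γ₁ s`, `G₂ = Γ₂ s`. Since `α₂^{ub} G₂ = G₁/(A - 1) - 1`, the
interference-plus-noise term of the strong user is `1 + α₂ G₂ = min (G₁/(A - 1)) (1 + G₂)`.
Its first argument gives the strong user's rate `A ≤ 1 + G₁/(1 + α₂ G₂)`; the weak user's
`B ≤ 1 + α₂ G₂` holds because the pairing criterion `B (A - 1) ≤ G₁` and `B - 1 ≤ G₂` bound
`B` by both arguments of the minimum.
-/

open Real

lemma one_add_min_div_mul_eq {G₁ G₂ A : ℝ} (hG₂ : 0 < G₂) (hA : 1 < A) :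
    1 + min ((G₁ + 1 - A) / (G₂ * (A - 1))) 1 * G₂ = min (G₁ / (A - 1)) (1 + G₂) := by
  have hA₁ : A - 1 ≠ 0 := sub_ne_zero.2 hA.ne'
  rw [min_mul_of_nonneg _ _ hG₂.le, ← min_add_add_left, one_mul]
  congr 1
  field_simp
  ring

lemma le_one_add_div_of_le_div_sub_one {G A m : ℝ} (hA : 1 < A) (hm : 0 < m)
    (h : m ≤ G / (A - 1)) : A ≤ 1 + G / m := by
  have : A - 1 ≤ G / m := (le_div_iff₀ hm).2 (by rwa [le_div_iff₀' (by linarith)] at h)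
  linarith

lemma le_logb_of_rpow_le {b x y : ℝ} (hb : 1 < b) (h : b ^ x ≤ y) : x ≤ logb b y :=
  (le_logb_iff_rpow_le hb ((rpow_pos_of_pos (by linarith) x).trans_le h)).2 h

theorem mpa_guarantee_general
    (Γ₁ Γ₂ s R₁bar R₂bar α₂ : ℝ)
    (hΓ₁ : 0 < Γ₁) (hΓ₂ : 0 < Γ₂) (hs : 0 < s) (hR₁ : 0 < R₁bar)
    (hcrit : s ≥ (2 : ℝ) ^ R₂bar * ((2 : ℝ) ^ R₁bar - 1) / Γ₁)
    (hcrit2 : s ≥ ((2 : ℝ) ^ R₂bar - 1) / Γ₂)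
    (hα₂ : α₂ = min ((Γ₁ * s + 1 - (2 : ℝ) ^ R₁bar) / (Γ₂ * s * ((2 : ℝ) ^ R₁bar - 1))) 1) :
    Real.logb 2 (1 + Γ₁ * s / (1 + α₂ * Γ₂ * s)) ≥ R₁bar ∧
      Real.logb 2 (1 + α₂ * Γ₂ * s) ≥ R₂bar := by
  set A := (2 : ℝ) ^ R₁bar
  set B := (2 : ℝ) ^ R₂bar
  have hA : 1 < A := one_lt_rpow one_lt_two hR₁
  have hG₁ : B * (A - 1) ≤ Γ₁ * s := by rwa [ge_iff_le, div_le_iff₀ hΓ₁, mul_comm s] at hcrit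
  have hG₂ : B - 1 ≤ Γ₂ * s := by rwa [ge_iff_le, div_le_iff₀ hΓ₂, mul_comm s] at hcrit2
  have hden : 1 + α₂ * Γ₂ * s = min (Γ₁ * s / (A - 1)) (1 + Γ₂ * s) := by
    rw [hα₂, mul_assoc]
    exact one_add_min_div_mul_eq (by positivity) hA
  have hB : B ≤ 1 + α₂ * Γ₂ * s :=
    hden ▸ le_min ((le_div_iff₀ (by linarith)).2 hG₁) (by linarith)
  have hden_pos : 0 < 1 + α₂ * Γ₂ * s := (rpow_pos_of_pos two_pos R₂bar).trans_le hB
  refine ⟨le_logb_of_rpow_le one_lt_two ?_, le_logb_of_rpow_le one_lt_two hB⟩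
  exact le_one_add_div_of_le_div_sub_one hA hden_pos (hden ▸ min_le_left _ _)

/-- MPA guarantee: under the pairing criterion, the allocation α₁ = 1,
α₂ = min{α₂^{ub}, 1} satisfies both minimum-rate constraints. -/
theorem mpa_guarantee
    (Γ₁ Γ₂ s R₁bar R₂bar α₂ : ℝ)
    (hΓ₁ : 0 < Γ₁) (hΓ₂ : 0 < Γ₂) (hs : 0 < s) (hR₁ : 0 < R₁bar) (hR₂ : 0 ≤ R₂bar)
    (hcrit : s ≥ (2 : ℝ) ^ R₂bar * ((2 : ℝ) ^ R₁bar - 1) / Γ₁)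
    (hcrit2 : s ≥ ((2 : ℝ) ^ R₂bar - 1) / Γ₂)
    (hα₂ : α₂ = min ((Γ₁ * s + 1 - (2 : ℝ) ^ R₁bar) / (Γ₂ * s * ((2 : ℝ) ^ R₁bar - 1))) 1) :
    Real.logb 2 (1 + Γ₁ * s / (1 + α₂ * Γ₂ * s)) ≥ R₁bar ∧
      Real.logb 2 (1 + α₂ * Γ₂ * s) ≥ R₂bar :=
  mpa_guarantee_general Γ₁ Γ₂ s R₁bar R₂bar α₂ hΓ₁ hΓ₂ hs hR₁ hcrit hcrit2 hα₂
end

section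
/- Let Γ₁, Γ₂ > 0, s > 0, R̄₁ > 0, R̄₂ ≥ 0, with s ≥ 2^{R̄₂}(2^{R̄₁} − 1)/Γ₁ and α₂^{ub} = (Γ₁s + 1 − 2^{R̄₁})/(Γ₂ s (2^{R̄₁} − 1)) ≤ 1. Then at the MPA allocation (α₁, α₂) = (1, α₂^{ub}) the achieved sum rate satisfies log₂(1 + (Γ₁ + α₂^{ub}Γ₂)s) ≥ R̄₁ + R̄₂. -/
/-!
Choosing `α₂ = α₂^{ub}` makes user 1's SINR `Γ₁s / (1 + α₂Γ₂s)` exactly `2^{R̄₁} − 1`, so the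
sum-rate argument factors as `2^{R̄₁} · (1 + α₂Γ₂s)` with `1 + α₂Γ₂s = Γ₁s / (2^{R̄₁} − 1)`.
The sum rate is therefore `R̄₁ + log₂ (Γ₁s / (2^{R̄₁} − 1))`, and the pairing criterion says
precisely that the last term is at least `R̄₂`.
-/

open Real

/-- `α₂^{ub}` with `a` standing for `2^{R̄₁}`. -/
noncomputable def mpaAlpha₂ (Γ₁ Γ₂ s a : ℝ) : ℝ :=
  (Γ₁ * s + 1 - a) / (Γ₂ * s * (a - 1))

section

variable {Γ₁ Γ₂ s a : ℝ}

lemma one_add_mpaAlpha₂_mul (hΓ₂ : Γ₂ ≠ 0) (hs : s ≠ 0) (ha : a ≠ 1) :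
    1 + mpaAlpha₂ Γ₁ Γ₂ s a * Γ₂ * s = Γ₁ * s / (a - 1) := by
  have : a - 1 ≠ 0 := sub_ne_zero.2 ha
  unfold mpaAlpha₂
  field_simp
  ring

lemma one_add_mpaAlpha₂_snr_eq (hΓ₂ : Γ₂ ≠ 0) (hs : s ≠ 0) (ha : a ≠ 1) :
    1 + (Γ₁ + mpaAlpha₂ Γ₁ Γ₂ s a * Γ₂) * s = a * (Γ₁ * s / (a - 1)) := by
  have : a - 1 ≠ 0 := sub_ne_zero.2 ha
  calc 1 + (Γ₁ + mpaAlpha₂ Γ₁ Γ₂ s a * Γ₂) * s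
      = (1 + mpaAlpha₂ Γ₁ Γ₂ s a * Γ₂ * s) + Γ₁ * s := by ring
    _ = a * (Γ₁ * s / (a - 1)) := by
      rw [one_add_mpaAlpha₂_mul hΓ₂ hs ha]
      field_simp
      ring

end

lemma add_le_logb_rpow_mul {b x R₁ R₂ : ℝ} (hb : 1 < b) (hx : b ^ R₂ ≤ x) :
    R₁ + R₂ ≤ logb b (b ^ R₁ * x) := by
  have hb₀ : 0 < b := zero_lt_one.trans hb
  have hx₀ : 0 < x := (rpow_pos_of_pos hb₀ R₂).trans_le hx
  rw [logb_mul (rpow_pos_of_pos hb₀ R₁).ne' hx₀.ne', logb_rpow hb₀ hb.ne']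
  gcongr
  exact (le_logb_iff_rpow_le hb hx₀).2 hx

theorem mpa_sum_rate_meets_targets_general
    (Γ₁ Γ₂ s R₁bar R₂bar : ℝ)
    (hΓ₁ : 0 < Γ₁) (hΓ₂ : 0 < Γ₂) (hs : 0 < s) (hR₁ : 0 < R₁bar)
    (hcrit : s ≥ (2 : ℝ) ^ R₂bar * ((2 : ℝ) ^ R₁bar - 1) / Γ₁) :
    Real.logb 2
        (1 + (Γ₁ + ((Γ₁ * s + 1 - (2 : ℝ) ^ R₁bar) /
          (Γ₂ * s * ((2 : ℝ) ^ R₁bar - 1))) * Γ₂) * s) ≥ R₁bar + R₂bar := by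
  have ha : 1 < (2 : ℝ) ^ R₁bar := one_lt_rpow one_lt_two hR₁
  have hrate₂ : (2 : ℝ) ^ R₂bar ≤ Γ₁ * s / ((2 : ℝ) ^ R₁bar - 1) := by
    rw [ge_iff_le, div_le_iff₀ hΓ₁] at hcrit
    rw [le_div_iff₀ (sub_pos.2 ha)]
    linarith
  change R₁bar + R₂bar ≤ logb 2 (1 + (Γ₁ + mpaAlpha₂ Γ₁ Γ₂ s (2 ^ R₁bar) * Γ₂) * s)
  rw [one_add_mpaAlpha₂_snr_eq hΓ₂.ne' hs.ne' ha.ne']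
  exact add_le_logb_rpow_mul one_lt_two hrate₂

/-- At the MPA allocation (1, α₂^{ub}), the achieved sum rate is at least R̄₁ + R̄₂. -/
theorem mpa_sum_rate_meets_targets
    (Γ₁ Γ₂ s R₁bar R₂bar : ℝ)
    (hΓ₁ : 0 < Γ₁) (hΓ₂ : 0 < Γ₂) (hs : 0 < s) (hR₁ : 0 < R₁bar) (hR₂ : 0 ≤ R₂bar)
    (hcrit : s ≥ (2 : ℝ) ^ R₂bar * ((2 : ℝ) ^ R₁bar - 1) / Γ₁)
    (hub : (Γ₁ * s + 1 - (2 : ℝ) ^ R₁bar) / (Γ₂ * s * ((2 : ℝ) ^ R₁bar - 1)) ≤ 1) :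
    Real.logb 2
        (1 + (Γ₁ + ((Γ₁ * s + 1 - (2 : ℝ) ^ R₁bar) /
          (Γ₂ * s * ((2 : ℝ) ^ R₁bar - 1))) * Γ₂) * s) ≥ R₁bar + R₂bar :=
  mpa_sum_rate_meets_targets_general Γ₁ Γ₂ s R₁bar R₂bar hΓ₁ hΓ₂ hs hR₁ hcrit
end
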